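/- arXiv:1611.01651 — 2 statements merged into one kernel-verified Lean document; each statement's English description precedes it below -/
import Mathlib

section
/- Let a, b be complex numbers with Re(a−b) > 0 and Re(b) > −1, let k ∈ ℕ and r ∈ ℝ. Then L_k^a(r) = (Γ(k+a+1)/(Γ(a−b)·Γ(k+b+1))) · ∫_0^1 s^b (1−s)^{a−b−1} L_k^b(r·s) ds. -/
/-!
Expanding `L_k^b(r s)` in powers of `s`, the integral becomes a finite sum of Beta integrals
`∫₀¹ s^(b+i) (1-s)^(a-b-1) ds = Γ(i+b+1) Γ(a-b) / Γ(i+a+1)`. Multiplying by the prefactor,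
the factors `Γ(a-b)`, `Γ(k+b+1)` and `Γ(i+b+1)` cancel and the `i`-th coefficient of `L_k^b`
turns into the `i`-th coefficient of `L_k^a`.
-/

open MeasureTheory

/-- The generalized Laguerre polynomial `L_k^a(x)` with complex parameter `a`. -/
noncomputable def genLaguerre (k : ℕ) (a : ℂ) (x : ℂ) : ℂ :=
  ∑ i ∈ Finset.range (k + 1),
    (-1 : ℂ) ^ i * (Complex.Gamma ((k : ℂ) + a + 1) /
      (Complex.Gamma ((i : ℂ) + a + 1) * (Nat.factorial (k - i) : ℂ) * (Nat.factorial i : ℂ)))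
      * x ^ i

open Complex intervalIntegral Set
open scoped Interval

noncomputable def laguerreCoeff (k : ℕ) (a : ℂ) (i : ℕ) : ℂ :=
  (-1 : ℂ) ^ i * (Gamma ((k : ℂ) + a + 1) /
    (Gamma ((i : ℂ) + a + 1) * (Nat.factorial (k - i) : ℂ) * (Nat.factorial i : ℂ)))

lemma genLaguerre_eq_sum (k : ℕ) (a x : ℂ) :
    genLaguerre k a x = ∑ i ∈ Finset.range (k + 1), laguerreCoeff k a i * x ^ i :=
  rfl

lemma laguerreCoeff_mul_gamma_ratio {a b : ℂ} {k i : ℕ} (hab : Gamma (a - b) ≠ 0)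
    (hkb : Gamma ((k : ℂ) + b + 1) ≠ 0) (hib : Gamma ((i : ℂ) + b + 1) ≠ 0) :
    Gamma ((k : ℂ) + a + 1) / (Gamma (a - b) * Gamma ((k : ℂ) + b + 1)) *
        (laguerreCoeff k b i *
          (Gamma ((i : ℂ) + b + 1) * Gamma (a - b) / Gamma ((i : ℂ) + a + 1)))
      = laguerreCoeff k a i := by
  unfold laguerreCoeff
  field_simp

lemma re_natCast_add_add_one_pos {u : ℂ} (hu : -1 < u.re) (n : ℕ) :
    0 < ((n : ℂ) + u + 1).re := by
  simp only [add_re, natCast_re, one_re]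
  linarith [n.cast_nonneg (α := ℝ)]

lemma eqOn_cpow_mul_one_sub_cpow_mul_pow (u v : ℂ) (n : ℕ) :
    EqOn (fun s : ℝ => (s : ℂ) ^ u * (1 - (s : ℂ)) ^ (v - 1) * (s : ℂ) ^ n)
      (fun s : ℝ => (s : ℂ) ^ ((n + u + 1) - 1) * (1 - (s : ℂ)) ^ (v - 1)) (Ι 0 1) := by
  intro s hs
  have hs0 : (s : ℂ) ≠ 0 :=
    ofReal_ne_zero.mpr (uIoc_of_le (zero_le_one (α := ℝ)) ▸ hs).1.ne'
  simp only [add_sub_cancel_right, cpow_add _ _ hs0, cpow_natCast]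
  ring

lemma intervalIntegrable_cpow_mul_one_sub_cpow_mul_pow {u v : ℂ} (hu : -1 < u.re)
    (hv : 0 < v.re) (n : ℕ) :
    IntervalIntegrable (fun s : ℝ => (s : ℂ) ^ u * (1 - (s : ℂ)) ^ (v - 1) * (s : ℂ) ^ n)
      volume 0 1 :=
  (intervalIntegrable_congr (eqOn_cpow_mul_one_sub_cpow_mul_pow u v n)).mpr
    (betaIntegral_convergent (re_natCast_add_add_one_pos hu n) hv)

lemma integral_cpow_mul_one_sub_cpow_mul_pow {u v : ℂ} (hu : -1 < u.re) (hv : 0 < v.re)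
    (n : ℕ) :
    ∫ s in (0 : ℝ)..1, (s : ℂ) ^ u * (1 - (s : ℂ)) ^ (v - 1) * (s : ℂ) ^ n
      = Gamma ((n : ℂ) + u + 1) * Gamma v / Gamma ((n : ℂ) + u + v + 1) := by
  have hnu := re_natCast_add_add_one_pos hu n
  have hnuv : 0 < ((n : ℂ) + u + 1 + v).re := by rw [add_re]; linarith
  rw [integral_congr_ae (ae_of_all _ (eqOn_cpow_mul_one_sub_cpow_mul_pow u v n)),
    Gamma_mul_Gamma_eq_betaIntegral hnu hv, add_right_comm _ v,
    mul_div_cancel_left₀ _ (Gamma_ne_zero_of_re_pos hnuv)]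
  rfl

theorem stmt7 (a b : ℂ) (hab : 0 < (a - b).re) (hb : -1 < b.re) (k : ℕ) (r : ℝ) :
    genLaguerre k a (r : ℂ) =
      (Complex.Gamma ((k : ℂ) + a + 1) /
          (Complex.Gamma (a - b) * Complex.Gamma ((k : ℂ) + b + 1))) *
        ∫ s in (0 : ℝ)..1,
          (s : ℂ) ^ b * (1 - (s : ℂ)) ^ (a - b - 1) * genLaguerre k b ((r : ℂ) * (s : ℂ)) := by
  have hGamma : ∀ i : ℕ, Gamma ((i : ℂ) + b + 1) ≠ 0 := fun i =>
    Gamma_ne_zero_of_re_pos (re_natCast_add_add_one_pos hb i)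
  have hexpand : (fun s : ℝ => (s : ℂ) ^ b * (1 - (s : ℂ)) ^ (a - b - 1) *
      genLaguerre k b ((r : ℂ) * (s : ℂ))) = fun s : ℝ => ∑ i ∈ Finset.range (k + 1),
        laguerreCoeff k b i * (r : ℂ) ^ i *
          ((s : ℂ) ^ b * (1 - (s : ℂ)) ^ (a - b - 1) * (s : ℂ) ^ i) := by
    funext s
    rw [genLaguerre_eq_sum, Finset.mul_sum]
    exact Finset.sum_congr rfl fun i _ => by ring
  rw [hexpand, integral_finsetSum fun i _ =>
      (intervalIntegrable_cpow_mul_one_sub_cpow_mul_pow hb hab i).const_mul _,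
    Finset.mul_sum, genLaguerre_eq_sum]
  refine Finset.sum_congr rfl fun i _ => ?_
  rw [intervalIntegral.integral_const_mul, integral_cpow_mul_one_sub_cpow_mul_pow hb hab,
    show (i : ℂ) + b + (a - b) + 1 = i + a + 1 by ring,
    ← laguerreCoeff_mul_gamma_ratio (Gamma_ne_zero_of_re_pos hab) (hGamma k) (hGamma i)]
  ring
end

section
/- For every real δ' > 0 there exists a constant C > 0 such that for all integers k ≥ 1 and all real η > 0: ∫_{η/2}^∞ |𝓛_k^{δ'}(r)|² r^{−δ'+1/2} dr ≤ C·η^{−δ'}·k^{1/2}. -/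
/-!
For `r > η/2` and `a = δ' > 0` the weight `r^(-a)` is at most `(η/2)^(-a)`, so the integral is at
most `(η/2)^(-a) k!/Γ(k+a+1) ∫₀^∞ e^(-r) r^(a+1/2) L_k^a(r)² dr`. The AM-GM bound
`√r ≤ t/2 + r/(2t)` reduces this to the two moments
`∫₀^∞ e^(-r) r^a L_k^a(r)² dr = Γ(k+a+1)/k!` and
`∫₀^∞ e^(-r) r^(a+1) L_k^a(r)² dr = (2k+a+1) Γ(k+a+1)/k!`, and `t = √(2k+a+1)` gives
the factor `√(2k+a+1) ≤ √(3+a) k^(1/2)`.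

The moments come from orthogonality: integrating the expansion of `L_k^a` termwise against
the Gamma integral, `∫₀^∞ e^(-x) x^(a+m) L_k^a(x) dx` is `(-1)^k Γ(k+a+1)/k!` times the
`k`-th forward difference at `a+1` of the rising factorial `y ↦ y (y+1) ⋯ (y+m-1)`, which
vanishes for `m < k` and is explicit for `m = k` and `m = k+1`.
-/

open MeasureTheory

/-- The generalized Laguerre polynomial `L_k^a(x)` with real parameter `a`. -/
noncomputable def genLaguerreR (k : ℕ) (a : ℝ) (x : ℝ) : ℝ :=
  ∑ i ∈ Finset.range (k + 1),
    (-1 : ℝ) ^ i * (Real.Gamma ((k : ℝ) + a + 1) /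
      (Real.Gamma ((i : ℝ) + a + 1) * (Nat.factorial (k - i) : ℝ) * (Nat.factorial i : ℝ)))
      * x ^ i

/-- The normalized Laguerre function `𝓛_k^a(r)`. -/
noncomputable def scriptLag (k : ℕ) (a : ℝ) (r : ℝ) : ℝ :=
  Real.sqrt (Real.Gamma ((k : ℝ) + 1) / Real.Gamma ((k : ℝ) + a + 1)) *
    Real.exp (-r / 2) * r ^ (a / 2) * genLaguerreR k a r

open Polynomial Finset fwdDiff Set Real Nat

theorem fwdDiff_ascPochhammer_eval {R : Type*} [CommRing R] (m : ℕ) :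
    Δ_[1] (fun y : R ↦ (ascPochhammer R (m + 1)).eval y) =
      ((m + 1 : ℕ) : R) • fun y ↦ (ascPochhammer R m).eval (y + 1) := by
  funext y
  have h := congrArg (eval y) (ascPochhammer_succ_comp_X_add_one (S := R) m)
  simp only [eval_comp, eval_add, eval_X, eval_one, nsmul_eq_mul, eval_mul, eval_natCast] at h
  simp only [fwdDiff, h, Pi.smul_apply, smul_eq_mul]
  ring

theorem fwdDiff_iter_ascPochhammer_eval {R : Type*} [CommRing R] (m k : ℕ) (y : R) :
    Δ_[1] ^[k] (fun y : R ↦ (ascPochhammer R (m + k)).eval y) y =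
      (m + k).descFactorial k * (ascPochhammer R m).eval (y + k) := by
  induction k generalizing y with
  | zero => simp
  | succ k ih =>
    rw [Function.iterate_succ_apply, ← add_assoc, fwdDiff_ascPochhammer_eval,
      fwdDiff_iter_const_smul, Pi.smul_apply,
      fwdDiff_iter_comp_add (h := 1) (fun y ↦ (ascPochhammer R (m + k)).eval y), ih,
      Nat.succ_descFactorial_succ]
    push_cast
    rw [smul_eq_mul, ← add_assoc, add_right_comm y]
    ring

theorem Gamma_add_nat_eq_ascPochhammer_eval_mul {y : ℝ} (hy : 0 < y) (m : ℕ) :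
    Gamma (y + m) = (ascPochhammer ℝ m).eval y * Gamma y := by
  induction m with
  | zero => simp
  | succ m ih =>
    rw [Nat.cast_succ, ← add_assoc, Gamma_add_one (by positivity), ih, ascPochhammer_succ_eval]
    ring

theorem Gamma_nat_add_pos {a : ℝ} (ha : -1 < a) (k : ℕ) : 0 < Gamma (k + a + 1) :=
  Gamma_pos_of_pos (by linarith [(k.cast_nonneg : (0 : ℝ) ≤ k)])

theorem integrableOn_Ioi_exp_neg_mul_rpow {c : ℝ} (hc : -1 < c) :
    IntegrableOn (fun x ↦ rexp (-x) * x ^ c) (Ioi 0) := by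
  simpa using GammaIntegral_convergent (show 0 < c + 1 by linarith)

theorem integral_Ioi_exp_neg_mul_rpow {c : ℝ} (hc : -1 < c) :
    ∫ x in Ioi 0, rexp (-x) * x ^ c = Gamma (c + 1) := by
  simp [Gamma_eq_integral (show 0 < c + 1 by linarith)]

noncomputable def genLaguerreCoeff (k : ℕ) (a : ℝ) (i : ℕ) : ℝ :=
  (-1) ^ i * (Gamma (k + a + 1) / (Gamma (i + a + 1) * (k - i)! * i !))

theorem genLaguerreR_eq_sum (k : ℕ) (a x : ℝ) :
    genLaguerreR k a x = ∑ i ∈ range (k + 1), genLaguerreCoeff k a i * x ^ i := rfl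

theorem exp_neg_mul_rpow_mul_genLaguerreR_mul {x : ℝ} (hx : 0 < x) (c : ℝ) (k : ℕ)
    (a g : ℝ) :
    rexp (-x) * x ^ c * genLaguerreR k a x * g =
      ∑ i ∈ range (k + 1), genLaguerreCoeff k a i * (rexp (-x) * x ^ (c + i) * g) := by
  rw [genLaguerreR_eq_sum, mul_sum, sum_mul]
  refine sum_congr rfl fun i _ ↦ ?_
  rw [rpow_add hx, rpow_natCast]
  ring

theorem integrableOn_exp_neg_mul_rpow_mul_genLaguerreR {c : ℝ} (hc : -1 < c) (k : ℕ) (a : ℝ) :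
    IntegrableOn (fun x ↦ rexp (-x) * x ^ c * genLaguerreR k a x) (Ioi 0) := by
  have hexp (i : ℕ) : -1 < c + i := by linarith [(i.cast_nonneg : (0 : ℝ) ≤ i)]
  refine IntegrableOn.congr_fun (integrable_finsetSum (range (k + 1)) fun i _ ↦
    (integrableOn_Ioi_exp_neg_mul_rpow (hexp i)).const_mul (genLaguerreCoeff k a i))
    (fun x hx ↦ ?_) measurableSet_Ioi
  simpa using (exp_neg_mul_rpow_mul_genLaguerreR_mul hx c k a 1).symm

theorem integrableOn_exp_neg_mul_rpow_mul_genLaguerreR_sq {c : ℝ} (hc : -1 < c) (k : ℕ)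
    (a : ℝ) :
    IntegrableOn (fun x ↦ rexp (-x) * x ^ c * genLaguerreR k a x ^ 2) (Ioi 0) := by
  have hexp (i : ℕ) : -1 < c + i := by linarith [(i.cast_nonneg : (0 : ℝ) ≤ i)]
  refine IntegrableOn.congr_fun (integrable_finsetSum (range (k + 1)) fun i _ ↦
    (integrableOn_exp_neg_mul_rpow_mul_genLaguerreR (hexp i) k a).const_mul
      (genLaguerreCoeff k a i)) (fun x hx ↦ ?_) measurableSet_Ioi
  simpa [sq, mul_assoc] using (exp_neg_mul_rpow_mul_genLaguerreR_mul hx c k a _).symm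

/-- The right-hand side is the `i`-th term of `fwdDiff_iter_eq_sum_shift`. -/
theorem genLaguerreCoeff_mul_Gamma {a : ℝ} (ha : -1 < a) {k i : ℕ} (hi : i ≤ k) (m : ℕ) :
    genLaguerreCoeff k a i * Gamma (a + m + i + 1) =
      (-1) ^ k * Gamma (k + a + 1) / k ! *
        (((-1 : ℤ) ^ (k - i) * k.choose i : ℤ) • (ascPochhammer ℝ m).eval (a + 1 + i)) := by
  have hy : 0 < a + 1 + i := by linarith [(i.cast_nonneg : (0 : ℝ) ≤ i)]
  have hG :
      Gamma (a + m + i + 1) = (ascPochhammer ℝ m).eval (a + 1 + i) * Gamma (a + 1 + i) := by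
    rw [← Gamma_add_nat_eq_ascPochhammer_eval_mul hy m]; ring_nf
  have hsign : (-1 : ℝ) ^ k * (-1) ^ (k - i) = (-1) ^ i := by
    rw [← Nat.sub_add_cancel hi, pow_add, Nat.add_sub_cancel, mul_comm, ← mul_assoc,
      ← pow_add, ← two_mul, pow_mul, neg_one_sq, one_pow, one_mul]
  have hchoose : (k.choose i : ℝ) * i ! * (k - i)! = k ! := by
    exact_mod_cast Nat.choose_mul_factorial_mul_factorial hi
  have hGpos : 0 < Gamma (a + 1 + i) := Gamma_pos_of_pos hy
  rw [genLaguerreCoeff, hG, zsmul_eq_mul]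
  push_cast
  rw [show (i : ℝ) + a + 1 = a + 1 + i by ring, ← hchoose]
  have hc : (k.choose i : ℝ) ≠ 0 := by exact_mod_cast (Nat.choose_pos hi).ne'
  field_simp
  linear_combination (-Gamma (k + a + 1) * (ascPochhammer ℝ m).eval (a + 1 + i)) * hsign

theorem integral_exp_neg_mul_rpow_mul_genLaguerreR {a : ℝ} (ha : -1 < a) (k m : ℕ) :
    ∫ x in Ioi 0, rexp (-x) * x ^ (a + m) * genLaguerreR k a x =
      (-1) ^ k * Gamma (k + a + 1) / k ! *
        Δ_[1] ^[k] (fun y ↦ (ascPochhammer ℝ m).eval y) (a + 1) := by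
  have hexp (i : ℕ) : -1 < a + m + i := by
    linarith [(m.cast_nonneg : (0 : ℝ) ≤ m), (i.cast_nonneg : (0 : ℝ) ≤ i)]
  rw [fwdDiff_iter_eq_sum_shift, mul_sum, setIntegral_congr_fun measurableSet_Ioi fun x hx ↦ by
      simpa using exp_neg_mul_rpow_mul_genLaguerreR_mul hx (a + m) k a 1,
    integral_finsetSum _ fun i _ ↦ (integrableOn_Ioi_exp_neg_mul_rpow (hexp i)).const_mul _]
  refine sum_congr rfl fun i hi ↦ ?_
  rw [integral_const_mul, integral_Ioi_exp_neg_mul_rpow (hexp i),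
    genLaguerreCoeff_mul_Gamma ha (Nat.le_of_lt_succ (mem_range.1 hi)), nsmul_one]

theorem integral_exp_neg_mul_rpow_mul_genLaguerreR_of_lt {a : ℝ} (ha : -1 < a) {k m : ℕ}
    (hmk : m < k) : ∫ x in Ioi 0, rexp (-x) * x ^ (a + m) * genLaguerreR k a x = 0 := by
  rw [integral_exp_neg_mul_rpow_mul_genLaguerreR ha,
    Polynomial.fwdDiff_iter_eq_zero_of_degree_lt (by rwa [ascPochhammer_natDegree]),
    Pi.zero_apply, mul_zero]

theorem integral_exp_neg_mul_rpow_mul_genLaguerreR_self {a : ℝ} (ha : -1 < a) (k : ℕ) :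
    ∫ x in Ioi 0, rexp (-x) * x ^ (a + k) * genLaguerreR k a x =
      (-1) ^ k * Gamma (k + a + 1) := by
  have hdiff := fwdDiff_iter_ascPochhammer_eval (R := ℝ) 0 k (a + 1)
  rw [zero_add, Nat.descFactorial_self, ascPochhammer_zero, eval_one, mul_one] at hdiff
  rw [integral_exp_neg_mul_rpow_mul_genLaguerreR ha, hdiff]
  field_simp

theorem integral_exp_neg_mul_rpow_mul_genLaguerreR_succ {a : ℝ} (ha : -1 < a) (k : ℕ) :
    ∫ x in Ioi 0, rexp (-x) * x ^ (a + (k + 1 : ℕ)) * genLaguerreR k a x =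
      (-1) ^ k * ((k + 1) * (k + a + 1) * Gamma (k + a + 1)) := by
  have hdiff := fwdDiff_iter_ascPochhammer_eval (R := ℝ) 1 k (a + 1)
  have hdesc : (1 + k).descFactorial k = (k + 1)! := by
    simpa [add_comm] using Nat.factorial_mul_descFactorial (Nat.le_succ k)
  rw [hdesc, ascPochhammer_one, eval_X, add_comm 1 k] at hdiff
  rw [integral_exp_neg_mul_rpow_mul_genLaguerreR ha, hdiff, Nat.factorial_succ]
  push_cast
  field_simp
  ring

theorem genLaguerreCoeff_self {a : ℝ} (ha : -1 < a) (k : ℕ) :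
    genLaguerreCoeff k a k = (-1) ^ k / k ! := by
  have := (Gamma_nat_add_pos ha k).ne'
  simp only [genLaguerreCoeff, tsub_self, factorial_zero, cast_one, mul_one]
  field_simp

theorem genLaguerreCoeff_succ_self {a : ℝ} (ha : -1 < a) (k : ℕ) :
    genLaguerreCoeff (k + 1) a k = (-1) ^ k * (k + a + 1) / k ! := by
  have hpos : 0 < (k : ℝ) + a + 1 := by linarith [(k.cast_nonneg : (0 : ℝ) ≤ k)]
  rw [genLaguerreCoeff, Nat.add_sub_cancel_left, Nat.cast_succ,
    show (k : ℝ) + 1 + a + 1 = (k + a + 1) + 1 by ring, Gamma_add_one hpos.ne']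
  have := (Gamma_pos_of_pos hpos).ne'
  field_simp
  simp

theorem integral_exp_neg_mul_rpow_mul_genLaguerreR_sq_eq_sum {a : ℝ} (ha : -1 < a) (k n : ℕ) :
    ∫ x in Ioi 0, rexp (-x) * x ^ (a + n) * genLaguerreR k a x ^ 2 =
      ∑ j ∈ range (k + 1), genLaguerreCoeff k a j *
        ∫ x in Ioi 0, rexp (-x) * x ^ (a + (j + n : ℕ)) * genLaguerreR k a x := by
  have hexp (j : ℕ) : -1 < a + n + j := by
    linarith [(n.cast_nonneg : (0 : ℝ) ≤ n), (j.cast_nonneg : (0 : ℝ) ≤ j)]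
  rw [setIntegral_congr_fun measurableSet_Ioi fun x hx ↦ by
      rw [sq, ← mul_assoc, exp_neg_mul_rpow_mul_genLaguerreR_mul hx],
    integral_finsetSum _ fun j _ ↦
      (integrableOn_exp_neg_mul_rpow_mul_genLaguerreR (hexp j) k a).const_mul _]
  refine sum_congr rfl fun j _ ↦ ?_
  rw [integral_const_mul, Nat.cast_add, add_comm (j : ℝ), ← add_assoc]

theorem integral_exp_neg_mul_rpow_mul_genLaguerreR_sq {a : ℝ} (ha : -1 < a) (k : ℕ) :
    ∫ x in Ioi 0, rexp (-x) * x ^ a * genLaguerreR k a x ^ 2 = Gamma (k + a + 1) / k ! := by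
  have h := integral_exp_neg_mul_rpow_mul_genLaguerreR_sq_eq_sum ha k 0
  rw [Nat.cast_zero, add_zero, sum_eq_single_of_mem k (self_mem_range_succ k) fun j hj hjk ↦ by
    rw [add_zero, integral_exp_neg_mul_rpow_mul_genLaguerreR_of_lt ha
      (lt_of_le_of_ne (Nat.le_of_lt_succ (mem_range.1 hj)) hjk), mul_zero]] at h
  rw [h, add_zero, genLaguerreCoeff_self ha, integral_exp_neg_mul_rpow_mul_genLaguerreR_self ha]
  field_simp
  rw [← pow_mul, pow_mul', neg_one_sq, one_pow, one_mul]

theorem integral_exp_neg_mul_rpow_add_one_mul_genLaguerreR_sq {a : ℝ} (ha : -1 < a) (k : ℕ) :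
    ∫ x in Ioi 0, rexp (-x) * x ^ (a + 1) * genLaguerreR k a x ^ 2 =
      (2 * k + a + 1) * Gamma (k + a + 1) / k ! := by
  have h := integral_exp_neg_mul_rpow_mul_genLaguerreR_sq_eq_sum ha k 1
  rw [Nat.cast_one, sum_range_succ, genLaguerreCoeff_self ha,
    integral_exp_neg_mul_rpow_mul_genLaguerreR_succ ha] at h
  rw [h]
  -- by orthogonality only the terms `j = k - 1` and `j = k` survive
  cases k with
  | zero => simp
  | succ k =>
    rw [sum_range_succ, sum_eq_zero fun j hj ↦ by
      rw [integral_exp_neg_mul_rpow_mul_genLaguerreR_of_lt ha (by simpa using hj), mul_zero],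
      genLaguerreCoeff_succ_self ha, integral_exp_neg_mul_rpow_mul_genLaguerreR_self ha]
    have hG : Gamma ((k + 1 : ℕ) + a + 1) = (k + a + 1) * Gamma (k + a + 1) := by
      rw [Nat.cast_succ, show (k : ℝ) + 1 + a + 1 = (k + a + 1) + 1 by ring,
        Gamma_add_one (by linarith [(k.cast_nonneg : (0 : ℝ) ≤ k)])]
    rw [hG, Nat.factorial_succ]
    push_cast
    have hsign : ((-1 : ℝ) ^ k) ^ 2 = 1 := by rw [← pow_mul, pow_mul', neg_one_sq, one_pow]
    field_simp
    rw [pow_succ]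
    linear_combination ((k + a + 1) * Gamma (k + a + 1) * (2 * k + a + 3)) * hsign

theorem sq_abs_scriptLag {a : ℝ} (ha : -1 < a) (k : ℕ) {r : ℝ} (hr : 0 ≤ r) :
    |scriptLag k a r| ^ 2 =
      k ! / Gamma (k + a + 1) * (rexp (-r) * r ^ a * genLaguerreR k a r ^ 2) := by
  have hG := Gamma_nat_add_pos ha k
  have hexp : rexp (-r / 2) ^ 2 = rexp (-r) := by rw [← exp_nat_mul]; ring_nf
  have hrpow : (r ^ (a / 2)) ^ 2 = r ^ a := by rw [← rpow_natCast, ← rpow_mul hr]; ring_nf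
  rw [sq_abs, scriptLag, mul_pow, mul_pow, mul_pow, sq_sqrt (by positivity), hexp, hrpow,
    Gamma_nat_eq_factorial]
  ring

theorem rpow_add_half_le {r : ℝ} (hr : 0 < r) (c : ℝ) {t : ℝ} (ht : 0 < t) :
    r ^ (c + 1 / 2) ≤ t / 2 * r ^ c + 1 / (2 * t) * r ^ (c + 1) := by
  have hsqrt : √r ≤ t / 2 + r / (2 * t) := by
    rw [div_add_div _ _ two_ne_zero (by positivity), le_div_iff₀ (by positivity)]
    nlinarith [sq_nonneg (√r - t), sq_sqrt hr.le]
  rw [rpow_add hr, rpow_add_one hr.ne', ← sqrt_eq_rpow]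
  calc r ^ c * √r ≤ r ^ c * (t / 2 + r / (2 * t)) :=
        mul_le_mul_of_nonneg_left hsqrt (rpow_pos_of_pos hr c).le
    _ = t / 2 * r ^ c + 1 / (2 * t) * (r ^ c * r) := by ring

theorem integral_exp_neg_mul_rpow_add_half_mul_genLaguerreR_sq_le {a : ℝ} (ha : -1 < a)
    (k : ℕ) :
    ∫ x in Ioi 0, rexp (-x) * x ^ (a + 1 / 2) * genLaguerreR k a x ^ 2 ≤
      √(2 * k + a + 1) * (Gamma (k + a + 1) / k !) := by
  have hpos : 0 < 2 * (k : ℝ) + a + 1 := by linarith [(k.cast_nonneg : (0 : ℝ) ≤ k)]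
  set t := √(2 * k + a + 1)
  have ht : 0 < t := sqrt_pos.2 hpos
  have ht2 : t ^ 2 = 2 * k + a + 1 := sq_sqrt hpos.le
  have hint (c : ℝ) (hc : -1 < c) := integrableOn_exp_neg_mul_rpow_mul_genLaguerreR_sq hc k a
  calc ∫ x in Ioi 0, rexp (-x) * x ^ (a + 1 / 2) * genLaguerreR k a x ^ 2
      ≤ ∫ x in Ioi 0, (t / 2 * (rexp (-x) * x ^ a * genLaguerreR k a x ^ 2) +
          1 / (2 * t) * (rexp (-x) * x ^ (a + 1) * genLaguerreR k a x ^ 2)) := by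
        refine setIntegral_mono_on (hint _ (by linarith)) (((hint _ ha).const_mul _).add
          ((hint _ (by linarith)).const_mul _)) measurableSet_Ioi fun x hx ↦ ?_
        have := mul_le_mul_of_nonneg_left (rpow_add_half_le (mem_Ioi.1 hx) a ht)
          (by positivity : 0 ≤ rexp (-x) * genLaguerreR k a x ^ 2)
        linarith
    _ = t * (Gamma (k + a + 1) / k !) := by
        rw [integral_add ((hint _ ha).const_mul _) ((hint _ (by linarith)).const_mul _),
          integral_const_mul, integral_const_mul, integral_exp_neg_mul_rpow_mul_genLaguerreR_sq ha,
          integral_exp_neg_mul_rpow_add_one_mul_genLaguerreR_sq ha, ← ht2]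
        field_simp
        ring

theorem setIntegral_Ioi_sq_abs_scriptLag_mul_rpow_le {a : ℝ} (ha : 0 ≤ a) (k : ℕ) {ρ : ℝ}
    (hρ : 0 < ρ) :
    ∫ r in Ioi ρ, |scriptLag k a r| ^ 2 * r ^ (-a + 1 / 2) ≤
      ρ ^ (-a) * √(2 * k + a + 1) := by
  have ha' : -1 < a := by linarith
  have hG := Gamma_nat_add_pos ha' k
  set f := fun r ↦ rexp (-r) * r ^ (a + 1 / 2) * genLaguerreR k a r ^ 2
  have hf : IntegrableOn f (Ioi 0) :=
    integrableOn_exp_neg_mul_rpow_mul_genLaguerreR_sq (by linarith) k a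
  calc ∫ r in Ioi ρ, |scriptLag k a r| ^ 2 * r ^ (-a + 1 / 2)
      ≤ ∫ r in Ioi ρ, ρ ^ (-a) * (k ! / Gamma (k + a + 1)) * f r := by
        have hpos : ∀ᵐ r ∂volume.restrict (Ioi ρ), 0 < r :=
          (ae_restrict_mem measurableSet_Ioi).mono fun r hr ↦ hρ.trans hr
        refine integral_mono_of_nonneg (hpos.mono fun r hr0 ↦ by positivity)
          ((hf.mono_set (Ioi_subset_Ioi hρ.le)).const_mul _) ?_
        filter_upwards [ae_restrict_mem measurableSet_Ioi, hpos] with r hr hr0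
        have hweight : r ^ (-a) ≤ ρ ^ (-a) :=
          rpow_le_rpow_of_nonpos hρ hr.le (neg_nonpos.2 ha)
        have hbase : 0 ≤ k ! / Gamma (k + a + 1) * f r := by
          simp only [f]; positivity
        calc |scriptLag k a r| ^ 2 * r ^ (-a + 1 / 2)
            = r ^ (-a) * (k ! / Gamma (k + a + 1) * f r) := by
              rw [sq_abs_scriptLag ha' k hr0.le, rpow_add hr0]
              simp only [f, rpow_add hr0]
              ring
          _ ≤ ρ ^ (-a) * (k ! / Gamma (k + a + 1) * f r) :=
              mul_le_mul_of_nonneg_right hweight hbase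
          _ = ρ ^ (-a) * (k ! / Gamma (k + a + 1)) * f r := by ring
    _ ≤ ∫ r in Ioi 0, ρ ^ (-a) * (k ! / Gamma (k + a + 1)) * f r := by
        refine setIntegral_mono_set (hf.const_mul _) ?_ (Ioi_subset_Ioi hρ.le).eventuallyLE
        filter_upwards [ae_restrict_mem measurableSet_Ioi] with r hr
        have : 0 ≤ f r := by simp only [f]; have := (mem_Ioi.1 hr).le; positivity
        positivity
    _ ≤ ρ ^ (-a) * √(2 * k + a + 1) := by
        rw [integral_const_mul]
        calc ρ ^ (-a) * (k ! / Gamma (k + a + 1)) * ∫ r in Ioi 0, f r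
            ≤ ρ ^ (-a) * (k ! / Gamma (k + a + 1)) *
                (√(2 * k + a + 1) * (Gamma (k + a + 1) / k !)) :=
              mul_le_mul_of_nonneg_left
                (integral_exp_neg_mul_rpow_add_half_mul_genLaguerreR_sq_le ha' k) (by positivity)
          _ = ρ ^ (-a) * √(2 * k + a + 1) := by field_simp

theorem stmt9 (δ' : ℝ) (hδ' : 0 < δ') :
    ∃ C > 0, ∀ k : ℕ, 1 ≤ k → ∀ η : ℝ, 0 < η →
      (∫ r in Set.Ioi (η / 2), |scriptLag k δ' r| ^ 2 * r ^ (-δ' + 1 / 2 : ℝ)) ≤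
        C * η ^ (-δ') * (k : ℝ) ^ ((1 / 2) : ℝ) := by
  refine ⟨2 ^ δ' * √(3 + δ'), by positivity, fun k hk η hη ↦ ?_⟩
  have hk' : (1 : ℝ) ≤ k := by exact_mod_cast hk
  have hsqrt : √(2 * k + δ' + 1) ≤ √(3 + δ') * (k : ℝ) ^ ((1 / 2) : ℝ) := by
    rw [← sqrt_eq_rpow, ← sqrt_mul (by positivity)]
    exact sqrt_le_sqrt (by nlinarith)
  have hscale : (η / 2) ^ (-δ') = 2 ^ δ' * η ^ (-δ') := by
    rw [div_rpow hη.le zero_le_two, rpow_neg zero_le_two, div_inv_eq_mul, mul_comm]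
  calc _ ≤ (η / 2) ^ (-δ') * √(2 * k + δ' + 1) :=
        setIntegral_Ioi_sq_abs_scriptLag_mul_rpow_le hδ'.le k (by positivity)
    _ ≤ (η / 2) ^ (-δ') * (√(3 + δ') * (k : ℝ) ^ ((1 / 2) : ℝ)) := by gcongr
    _ = 2 ^ δ' * √(3 + δ') * η ^ (-δ') * (k : ℝ) ^ ((1 / 2) : ℝ) := by rw [hscale]; ring
end
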